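/- Let g be the Lie algebra 23457A with structure equations de^1=de^2=0, de^3=-e^{12}, de^4=-e^{13}, de^5=-e^{14}, de^6=-e^{15}, de^7=-e^{23}. Then every closed 4-form on g (i.e., every κ ∈ Λ⁴g* with dκ=0) lies in the subspace ⟨e^1,e^2⟩∧Λ³g*, that is, κ∧e^1∧e^2=0 for every closed 4-form κ. -/

import Mathlib

noncomputable section

/-- We model the dual `g*` of a 7-dimensional real Lie algebra on `ℝ⁷`. -/
abbrev V7 : Type := Fin 7 → ℝ

/-- The exterior algebra `Λ•g*` of forms. -/
abbrev E7 : Type := ExteriorAlgebra ℝ V7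

/-- The generators `e^1, …, e^7` (indexed `0, …, 6`). -/
def ε (i : Fin 7) : E7 := ExteriorAlgebra.ι ℝ (Pi.single i 1)

/-- The degree-`k` component `Λ^k g*` of the exterior algebra. -/
def deg (k : ℕ) : Submodule ℝ E7 :=
  LinearMap.range (ExteriorAlgebra.ι ℝ : V7 →ₗ[ℝ] E7) ^ k

/-- Dualization `g → g**` induced by the standard basis (identifying `g ≅ ℝ⁷`). -/
def dualize : V7 →ₗ[ℝ] Module.Dual ℝ V7 := (Pi.basisFun ℝ (Fin 7)).toDual

/-- Interior product (contraction) `ι_v` of forms with a vector `v ∈ g`. -/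
def ic (v : V7) : E7 →ₗ[ℝ] E7 := CliffordAlgebra.contractLeft (dualize v)

lemma ic_sq (v : V7) : (ic v) * (ic v) = 0 := by
  ext x
  simp [ic, Module.End.mul_apply, CliffordAlgebra.contractLeft_contractLeft]

/-- Contraction of forms by multivectors (identified with elements of `E7` via the
basis), extended multiplicatively from contraction by vectors. -/
def contra : E7 →ₐ[ℝ] Module.End ℝ E7 :=
  ExteriorAlgebra.lift ℝ
    ⟨{ toFun := ic,
       map_add' := by intro a b; ext x; simp [ic],
       map_smul' := by intro c a; ext x; simp [ic] }, fun v => ic_sq v⟩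

/-- The standard volume form `e^{1234567}`. -/
def vol7 : E7 := ε 0 * ε 1 * ε 2 * ε 3 * ε 4 * ε 5 * ε 6

/-- The standard `G₂` 3-form
`φ₀ = e^{127}+e^{347}+e^{567}+e^{135}-e^{146}-e^{236}-e^{245}`. -/
def phi0 : E7 :=
  ε 0*ε 1*ε 6 + ε 2*ε 3*ε 6 + ε 4*ε 5*ε 6 + ε 0*ε 2*ε 4
    - ε 0*ε 3*ε 5 - ε 1*ε 2*ε 5 - ε 1*ε 3*ε 4

/-- The standard `G₂` 4-form
`σ₀ = e^{3456}+e^{1256}+e^{1234}+e^{2467}-e^{2357}-e^{1457}-e^{1367}` (the Hodge dual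
of `φ₀` for the Euclidean metric and standard orientation). -/
def sigma0 : E7 :=
  ε 2*ε 3*ε 4*ε 5 + ε 0*ε 1*ε 4*ε 5 + ε 0*ε 1*ε 2*ε 3 + ε 1*ε 3*ε 5*ε 6
    - ε 1*ε 2*ε 4*ε 6 - ε 0*ε 3*ε 4*ε 6 - ε 0*ε 2*ε 5*ε 6

/-- A 4-form is positive (stable) if it lies in the `GL(7,ℝ)`-orbit of the standard
`G₂` 4-form `σ₀`. -/
def Positive4 (σ : E7) : Prop :=
  ∃ A : V7 ≃ₗ[ℝ] V7, ExteriorAlgebra.map (A.toLinearMap) sigma0 = σ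

/-- `IsCE dg D` says that `D` is the Chevalley–Eilenberg differential, extended as an
odd (degree-1) derivation to `Λ•g*`, of the Lie algebra whose structure equations are
`d e^i = dg i`: it kills constants and satisfies the graded Leibniz rule against
degree-one elements (this characterizes `D` uniquely). -/
def IsCE (dg : Fin 7 → E7) (D : E7 →ₗ[ℝ] E7) : Prop :=
  D 1 = 0 ∧ ∀ (i : Fin 7) (y : E7), D (ε i * y) = dg i * y - ε i * D y

/-- Structure equations of the Lie algebra `23457A`:
`de^1 = de^2 = 0`, `de^3 = -e^{12}`, `de^4 = -e^{13}`, `de^5 = -e^{14}`,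
`de^6 = -e^{15}`, `de^7 = -e^{23}`. -/
def dg23457A : Fin 7 → E7 :=
  ![0, 0, -(ε 0 * ε 1), -(ε 0 * ε 2), -(ε 0 * ε 3), -(ε 0 * ε 4), -(ε 1 * ε 2)]


/-! In the paper's numbering `e^1, …, e^7`, only the coefficients `κ_S` with `S ⊆ {3,…,7}`
survive in `κ ∧ e^{12}`, and the structure equations make each of them a combination of
coefficients of `dκ`:
`κ_{3456} = -(dκ)_{12456}`, `κ_{3457} = (dκ)_{12367} - (dκ)_{12457}`, `κ_{3467} = -(dκ)_{13457}`,
`κ_{3567} = -(dκ)_{12567}`, `κ_{4567} = -(dκ)_{13567}`.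
Hence `κ ∧ e^{12} = T (dκ)` for an explicit linear map `T`, an identity that only has to be
checked on the 35 basis 4-forms; for closed `κ` the right-hand side vanishes. -/

open ExteriorAlgebra

theorem ExteriorAlgebra.exteriorPower_le_ker_of_ιMulti_sorted
    {R M N I : Type*} [CommRing R] [AddCommGroup M] [Module R M] [AddCommGroup N] [Module R N]
    [LinearOrder I] {v : I → M} (hv : Submodule.span R (Set.range v) = ⊤) {k : ℕ}
    (L : ExteriorAlgebra R M →ₗ[R] N) (hL : ∀ s : Fin k ↪o I, L (ιMulti R k (v ∘ s)) = 0) :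
    ⋀[R]^k M ≤ LinearMap.ker L := by
  rw [← exteriorPower.ιMulti_family_span_fixedDegree_of_span R hv, Submodule.span_le,
    Set.range_subset_iff]
  exact fun s => hL _

lemma ε_mul_self_mul (i : Fin 7) (x : E7) : ε i * (ε i * x) = 0 := by
  rw [← mul_assoc, ε, ι_sq_zero, zero_mul]

lemma ε_mul_ε_anticomm (i j : Fin 7) : ε i * ε j = -(ε j * ε i) :=
  eq_neg_of_add_eq_zero_left (ι_add_mul_swap _ _)

lemma ε_mul_ε_mul_ε_self_mul (i j : Fin 7) (x : E7) : ε i * (ε j * (ε i * x)) = 0 := by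
  rw [← mul_assoc (ε j), ε_mul_ε_anticomm j i, neg_mul, mul_neg, mul_assoc, ε_mul_self_mul,
    neg_zero]

lemma commute_ε_mul_ε (i j k : Fin 7) : Commute (ε i * ε j) (ε k) := by
  rw [Commute, SemiconjBy, mul_assoc, ε_mul_ε_anticomm j k, mul_neg, ← mul_assoc,
    ε_mul_ε_anticomm i k, neg_mul, neg_neg, mul_assoc]

lemma monomial_mul_ε_mul_ε (i j a b c d : Fin 7) :
    ε a * (ε b * (ε c * ε d)) * (ε i * ε j) = ε i * (ε j * (ε a * (ε b * (ε c * ε d)))) := by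
  have h := commute_ε_mul_ε i j
  rw [← ((h a).mul_right ((h b).mul_right ((h c).mul_right (h d)))).eq, mul_assoc]

lemma dualize_single (a i : Fin 7) :
    dualize (Pi.single a 1) (Pi.single i 1) = if a = i then 1 else 0 := by
  rw [dualize]
  simpa only [Pi.basisFun_apply] using (Pi.basisFun ℝ (Fin 7)).toDual_apply a i

@[simp] lemma ic_one (v : V7) : ic v 1 = 0 :=
  CliffordAlgebra.contractLeft_one (Q := 0) (dualize v)

@[simp] lemma ic_single_ε_mul (a i : Fin 7) (x : E7) :
    ic (Pi.single a 1) (ε i * x) =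
      (if a = i then (1 : ℝ) else 0) • x - ε i * ic (Pi.single a 1) x := by
  rw [ic, ε, ExteriorAlgebra.ι, CliffordAlgebra.contractLeft_ι_mul, dualize_single]

@[simp] lemma ic_single_ε (a i : Fin 7) :
    ic (Pi.single a 1) (ε i) = if a = i then 1 else 0 := by
  simpa using ic_single_ε_mul a i 1

@[simp] lemma contra_ε (i : Fin 7) : contra (ε i) = ic (Pi.single i 1) :=
  ExteriorAlgebra.lift_ι_apply _ _ _ _

lemma IsCE.map_ε {dg : Fin 7 → E7} {D : E7 →ₗ[ℝ] E7} (hD : IsCE dg D) (i : Fin 7) :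
    D (ε i) = dg i := by
  simpa [hD.1] using hD.2 i 1

/-- `contra (ε p*ε q*ε r*ε s*ε t)` reads off the coefficient of `ε p*ε q*ε r*ε s*ε t` in a
5-form; with `e^{i+1} = ε i` this is the map `T` above. -/
def wedgeE12OfD : E7 →ₗ[ℝ] E7 :=
  -(LinearMap.mulRight ℝ (ε 0*ε 1*ε 2*ε 3*ε 4*ε 5) ∘ₗ contra (ε 0*ε 1*ε 3*ε 4*ε 5))
  + LinearMap.mulRight ℝ (ε 0*ε 1*ε 2*ε 3*ε 4*ε 6) ∘ₗ
      (contra (ε 0*ε 1*ε 2*ε 5*ε 6) - contra (ε 0*ε 1*ε 3*ε 4*ε 6))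
  - LinearMap.mulRight ℝ (ε 0*ε 1*ε 2*ε 3*ε 5*ε 6) ∘ₗ contra (ε 0*ε 2*ε 3*ε 4*ε 6)
  - LinearMap.mulRight ℝ (ε 0*ε 1*ε 2*ε 4*ε 5*ε 6) ∘ₗ contra (ε 0*ε 1*ε 4*ε 5*ε 6)
  - LinearMap.mulRight ℝ (ε 0*ε 1*ε 3*ε 4*ε 5*ε 6) ∘ₗ contra (ε 0*ε 2*ε 4*ε 5*ε 6)

section

variable {D : E7 →ₗ[ℝ] E7} (hD : IsCE dg23457A D)
include hD

set_option maxHeartbeats 1000000 in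
lemma monomial_mul_ε01_eq_wedgeE12OfD {a b c d : Fin 7} (hab : a < b) (hbc : b < c)
    (hcd : c < d) :
    ε a * (ε b * (ε c * ε d)) * (ε 0 * ε 1) = wedgeE12OfD (D (ε a * (ε b * (ε c * ε d)))) := by
  rw [monomial_mul_ε_mul_ε]
  fin_cases a <;> fin_cases b <;> (try exact absurd hab (by decide)) <;>
    fin_cases c <;> (try exact absurd hbc (by decide)) <;>
    fin_cases d <;> (try exact absurd hcd (by decide)) <;>
    simp [hD.2, hD.map_ε, dg23457A, wedgeE12OfD, mul_assoc, Module.End.mul_apply,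
      ε_mul_self_mul, ε_mul_ε_mul_ε_self_mul]

lemma mul_ε01_eq_wedgeE12OfD {κ : E7} (hκ : κ ∈ deg 4) :
    κ * (ε 0 * ε 1) = wedgeE12OfD (D κ) := by
  have hker : deg 4 ≤ LinearMap.ker (LinearMap.mulRight ℝ (ε 0 * ε 1) - wedgeE12OfD ∘ₗ D) := by
    refine exteriorPower_le_ker_of_ιMulti_sorted (Pi.basisFun ℝ (Fin 7)).span_eq _ fun s => ?_
    have hs := s.strictMono
    have hmonomial : ιMulti ℝ 4 (Pi.basisFun ℝ (Fin 7) ∘ s) =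
        ε (s 0) * (ε (s 1) * (ε (s 2) * ε (s 3))) := by
      simp [ιMulti_apply, ε, Matrix.vecTail]
    rw [LinearMap.sub_apply, hmonomial, sub_eq_zero]
    exact monomial_mul_ε01_eq_wedgeE12OfD hD (hs (by decide)) (hs (by decide)) (hs (by decide))
  simpa only [LinearMap.mem_ker, LinearMap.sub_apply, LinearMap.mulRight_apply,
    LinearMap.comp_apply, sub_eq_zero] using hker hκ

end

/-- every closed 4-form `κ` on `23457A` lies in `⟨e^1,e^2⟩ ∧ Λ³g*`,
equivalently `κ ∧ e^1 ∧ e^2 = 0`. -/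
theorem stmt3_23457A_closed_fourforms (D : E7 →ₗ[ℝ] E7) (hD : IsCE dg23457A D) :
    ∀ κ ∈ deg 4, D κ = 0 → κ * (ε 0 * ε 1) = 0 := by
  intro κ hκ hclosed
  rw [mul_ε01_eq_wedgeE12OfD hD hκ, hclosed, map_zero]
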